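/- arXiv:2009.10597 — 3 statements merged into one kernel-verified Lean document; each statement's English description precedes it below -/
import Mathlib

section
/- Let $m,n,r,s$ be positive integers with $n=m+2$, $m\geq 4$, and $s\binom{m-1}{3}=r\binom{n-1}{3}$ (equivalently, $s(m-2)(m-3)=rm(m+1)$). Then $s\geq r+2$. -/
/-! Clearing the factor `(m - 1) / 6` turns the hypothesis into `s (m-2)(m-3) = r m (m+1)`,
so `s > r`. If `s = r + 1` the equation becomes `m² - (6r+5) m + 6(r+1) = 0`, whose left side
is `(m - 1)(m - 6r - 4) + 2`; hence `m - 1 ∣ 2`, impossible for `m ≥ 4`. -/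

lemma Nat.six_mul_choose_three (n : ℕ) : 6 * n.choose 3 = n * (n - 1) * (n - 2) := by
  rw [show 6 = Nat.factorial 3 by rfl, ← Nat.descFactorial_eq_factorial_mul_choose]
  simp only [Nat.descFactorial_succ, Nat.descFactorial_zero, Nat.sub_zero]
  ring

lemma mul_sub_two_mul_sub_three_eq {m r s : ℕ} (hm : 2 ≤ m)
    (h : s * (m - 1).choose 3 = r * (m + 1).choose 3) :
    s * ((m - 2) * (m - 3)) = r * (m * (m + 1)) := by
  have h6 : (m - 1) * (s * ((m - 2) * (m - 3))) = (m - 1) * (r * (m * (m + 1))) := by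
    have := congrArg (6 * ·) h
    simp only [← mul_assoc, mul_comm _ s, mul_comm _ r] at this
    rw [mul_assoc s, mul_assoc r, Nat.six_mul_choose_three, Nat.six_mul_choose_three] at this
    rw [show m - 1 - 1 = m - 2 by omega, show m - 1 - 2 = m - 3 by omega,
      show m + 1 - 1 = m by omega, show m + 1 - 2 = m - 1 by omega] at this
    linarith
  exact Nat.eq_of_mul_eq_mul_left (by omega) h6

lemma lt_of_mul_sub_two_mul_sub_three_eq {m r s : ℕ} (hm : 0 < m) (hr : 0 < r)
    (h : s * ((m - 2) * (m - 3)) = r * (m * (m + 1))) : r < s := by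
  by_contra! hsr
  have hlt : (m - 2) * (m - 3) < m * (m + 1) :=
    Nat.mul_lt_mul_of_le_of_lt (by omega) (by omega) (by positivity)
  have : r * ((m - 2) * (m - 3)) < r * (m * (m + 1)) := Nat.mul_lt_mul_of_pos_left hlt hr
  nlinarith [Nat.mul_le_mul_right ((m - 2) * (m - 3)) hsr]

lemma Int.sub_one_dvd_two_of_succ_mul_eq {m r : ℤ}
    (h : (r + 1) * ((m - 2) * (m - 3)) = r * (m * (m + 1))) : m - 1 ∣ 2 :=
  ⟨6 * r + 4 - m, by linear_combination h⟩

lemma succ_mul_sub_two_mul_sub_three_ne {m : ℕ} (hm : 4 ≤ m) (r : ℕ) :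
    (r + 1) * ((m - 2) * (m - 3)) ≠ r * (m * (m + 1)) := by
  intro h
  have hdvd : (m : ℤ) - 1 ∣ 2 := Int.sub_one_dvd_two_of_succ_mul_eq <| by
    have := congrArg (fun x : ℕ => (x : ℤ)) h
    push_cast [Nat.cast_sub (by omega : 2 ≤ m), Nat.cast_sub (by omega : 3 ≤ m)] at this
    exact this
  have := Int.le_of_dvd two_pos hdvd
  omega

theorem stmt_5_general (m n r s : ℕ) (hr : 0 < r)
    (hn : n = m + 2) (hm : 4 ≤ m)
    (h : s * (m - 1).choose 3 = r * (n - 1).choose 3) :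
    s ≥ r + 2 := by
  subst hn
  have hred := mul_sub_two_mul_sub_three_eq (m := m) (by omega) (by simpa using h)
  have hlt := lt_of_mul_sub_two_mul_sub_three_eq (by omega) hr hred
  have hne : s ≠ r + 1 := by
    rintro rfl
    exact succ_mul_sub_two_mul_sub_three_ne hm r hred
  omega

theorem stmt_5 (m n r s : ℕ) (hm0 : 0 < m) (hn0 : 0 < n) (hr : 0 < r) (hs : 0 < s)
    (hn : n = m + 2) (hm : 4 ≤ m)
    (h : s * (m - 1).choose 3 = r * (n - 1).choose 3) :
    s ≥ r + 2 :=
  stmt_5_general m n r s hr hn hm h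
end

section
/- Let $m,n,r,s$ be positive integers with $n>m$, $s>r$, $s\binom{m-1}{3}=r\binom{n-1}{3}$, $m\geq 4$, $n\geq m+2$, and suppose $m(s-r)\equiv 1\pmod 3$, with the additional fact that if $n-m=2$ then $s-r\geq 2$. Then $[m(s-r)-1]\binom{n-m}{3}+[m(s-r)-2]\cdot\frac{m-1}{2}\binom{n-m}{2}\geq (n-m)\binom{m-1}{2}$. -/
/-!
Write `a = m`, `d = s - r`, `k = n - m`. Dropping the nonnegative `binom(k,3)` term and using
`binom(k,2) = k(k-1)/2`, the inequality reduces to `(a d - 2)(k - 1) ≥ 2(a - 2)`. This holds as soon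
as `d (k - 1) ≥ 2`, which is exactly what `n - m ≥ 2` together with `n - m = 2 → s - r ≥ 2` provide.
-/

lemma two_mul_sub_two_le {a d j : ℚ} (ha : 2 ≤ a) (hd : 1 ≤ d) (hj : 1 ≤ j) (hdj : 2 ≤ d * j) :
    2 * (a - 2) ≤ (a * d - 2) * j := by
  rcases le_total j 2 with hj2 | hj2
  · nlinarith
  · nlinarith [mul_le_mul_of_nonneg_left hdj (by linarith : (0 : ℚ) ≤ a - 2)]

lemma mul_choose_two_le (a d k : ℕ) (ha : 2 ≤ a) (hdk : 2 ≤ d * (k - 1)) :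
    (k : ℚ) * (a - 1).choose 2 ≤
      ((a : ℚ) * d - 1) * k.choose 3 + ((a : ℚ) * d - 2) * (((a : ℚ) - 1) / 2) * k.choose 2 := by
  have hd : 1 ≤ d := Nat.pos_of_ne_zero (by rintro rfl; simp at hdk)
  have hk : 2 ≤ k := by
    by_contra! hk
    simp [Nat.sub_eq_zero_of_le (Nat.le_of_lt_succ hk)] at hdk
  have hdk' : (2 : ℚ) ≤ d * ((k : ℚ) - 1) := by
    rw [← Nat.cast_pred (by omega)]; exact_mod_cast hdk
  have haq : (2 : ℚ) ≤ a := by exact_mod_cast ha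
  have hdq : (1 : ℚ) ≤ d := by exact_mod_cast hd
  have hkq : (2 : ℚ) ≤ k := by exact_mod_cast hk
  have hfactor := two_mul_sub_two_le haq hdq (by linarith) hdk'
  have hchoose3 : 0 ≤ ((a : ℚ) * d - 1) * k.choose 3 :=
    mul_nonneg (by nlinarith) (Nat.cast_nonneg _)
  have hweight : (0 : ℚ) ≤ k * ((a : ℚ) - 1) / 4 := by
    have : (0 : ℚ) ≤ a - 1 := by linarith
    positivity
  rw [Nat.cast_choose_two, Nat.cast_choose_two, Nat.cast_pred (by omega)]
  calc (k : ℚ) * ((a - 1) * (a - 1 - 1) / 2) = k * ((a : ℚ) - 1) / 4 * (2 * (a - 2)) := by ring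
    _ ≤ k * ((a : ℚ) - 1) / 4 * ((a * d - 2) * (k - 1)) := by gcongr
    _ ≤ ((a : ℚ) * d - 1) * k.choose 3 + k * ((a : ℚ) - 1) / 4 * ((a * d - 2) * (k - 1)) :=
      le_add_of_nonneg_left hchoose3
    _ = _ := by ring

theorem stmt_8_general (m n r s : ℕ)
    (hrs : r < s)
    (hm : 4 ≤ m) (hn : m + 2 ≤ n)
    (hextra : n - m = 2 → 2 ≤ s - r) :
    ((m : ℚ) * ((s : ℚ) - r) - 1) * ((n - m).choose 3 : ℚ)
      + ((m : ℚ) * ((s : ℚ) - r) - 2) * (((m : ℚ) - 1) / 2) * ((n - m).choose 2 : ℚ)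
      ≥ ((n : ℚ) - m) * ((m - 1).choose 2 : ℚ) := by
  have hdk : 2 ≤ (s - r) * (n - m - 1) := by
    rcases (by omega : n - m = 2 ∨ 3 ≤ n - m) with hk | hk
    · simpa [hk] using hextra hk
    · exact le_trans (by omega) (Nat.mul_le_mul (by omega : 1 ≤ s - r) (by omega : 2 ≤ n - m - 1))
  have hsr : (s : ℚ) - r = ((s - r : ℕ) : ℚ) := by rw [Nat.cast_sub hrs.le]
  have hnm : (n : ℚ) - m = ((n - m : ℕ) : ℚ) := by rw [Nat.cast_sub (by omega)]
  rw [hsr, hnm]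
  exact mul_choose_two_le m (s - r) (n - m) (by omega) hdk

theorem stmt_8 (m n r s : ℕ) (hm0 : 0 < m) (hn0 : 0 < n) (hr : 0 < r) (hs : 0 < s)
    (hmn : m < n) (hrs : r < s)
    (h : s * (m - 1).choose 3 = r * (n - 1).choose 3)
    (hm : 4 ≤ m) (hn : m + 2 ≤ n)
    (hmod : (m * (s - r)) % 3 = 1)
    (hextra : n - m = 2 → 2 ≤ s - r) :
    ((m : ℚ) * ((s : ℚ) - r) - 1) * ((n - m).choose 3 : ℚ)
      + ((m : ℚ) * ((s : ℚ) - r) - 2) * (((m : ℚ) - 1) / 2) * ((n - m).choose 2 : ℚ)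
      ≥ ((n : ℚ) - m) * ((m - 1).choose 2 : ℚ) :=
  stmt_8_general m n r s hrs hm hn hextra
end

section
/- Let $m,n$ be integers with $m\geq 6$ and $2m\leq n\leq 4m$. Then $12\binom{m}{2}\binom{n-m}{2}\geq 12\binom{n-1}{3}$. -/
/-!
Write `m = p + 6` and `n = 2m + k` with `p ≥ 0` and `0 ≤ k ≤ 2m`. After clearing the
denominators of the binomial coefficients, the difference of the two sides becomes a polynomial
in `p` and `k` whose only negative coefficient is that of `-2k³`; since `k ≤ 2m = 2p + 12`, that
term is absorbed by `24k² + 4pk²`, which the remaining coefficients still cover.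
-/

theorem Nat.cast_choose_three {K : Type*} [DivisionRing K] [CharZero K] (a : ℕ) :
    (a.choose 3 : K) = a * (a - 1) * (a - 2) / 6 := by
  rw [Nat.cast_choose_eq_descPochhammer_div]
  simp [descPochhammer_succ_eval, Nat.factorial]

theorem choose_three_poly_le_choose_two_mul_choose_two_poly {m n : ℝ} (hm : 6 ≤ m)
    (hn₁ : 2 * m ≤ n) (hn₂ : n ≤ 4 * m) :
    (n - 1) * (n - 2) * (n - 3) / 6 ≤ m * (m - 1) / 2 * ((n - m) * (n - m - 1) / 2) := by
  obtain ⟨p, hp, rfl⟩ : ∃ p, 0 ≤ p ∧ m = p + 6 := ⟨m - 6, by linarith, by ring⟩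
  obtain ⟨k, hk, rfl⟩ : ∃ k, 0 ≤ k ∧ n = 2 * (p + 6) + k :=
    ⟨n - 2 * (p + 6), by linarith, by ring⟩
  have hk₂ : 0 ≤ 2 * (p + 6) - k := by linarith
  rw [← sub_nonneg]
  convert_to 0 ≤ (720 + 392 * k + 6 * k ^ 2 + 784 * p + 303 * p * k + 17 * p * k ^ 2
      + 303 * p ^ 2 + 75 * p ^ 2 * k + 3 * p ^ 2 * k ^ 2 + 50 * p ^ 3 + 6 * p ^ 3 * k + 3 * p ^ 4
      + 2 * k ^ 2 * (2 * (p + 6) - k)) / 12 using 1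
  · ring
  · positivity

theorem stmt_16 (m n : ℕ) (hm : 6 ≤ m) (hn1 : 2 * m ≤ n) (hn2 : n ≤ 4 * m) :
    12 * (n - 1).choose 3 ≤ 12 * m.choose 2 * (n - m).choose 2 := by
  have key := choose_three_poly_le_choose_two_mul_choose_two_poly (m := (m : ℝ)) (n := (n : ℝ))
    (by exact_mod_cast hm) (by exact_mod_cast hn1) (by exact_mod_cast hn2)
  rw [← Nat.cast_le (α := ℝ)]
  push_cast [Nat.cast_choose_two, Nat.cast_choose_three, Nat.cast_sub (by omega : 1 ≤ n),
    Nat.cast_sub (by omega : m ≤ n)]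
  linear_combination 12 * key
end
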